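/- arXiv:1908.05896 — 7 statements merged into one kernel-verified Lean document; each statement's English description precedes it below -/
import Mathlib

section
/- For every fixed real number t with 0 < t < 1, the function τ : (0, ∞) → (0, ∞) defined by τ(α) = α t^(α−1) / (1 − t^α) is convex on (0, ∞). -/
/-!
With `c = -log t > 0` one has `τ(α) = (t c)⁻¹ φ(c α)` for `φ(x) = x / (eˣ - 1)`, so it suffices
that `φ` is convex on `(0, ∞)`. Its second derivative is `eˣ (x (eˣ + 1) - 2 (eˣ - 1)) / (eˣ - 1)³`,
which is nonnegative because `2 (eˣ - 1) ≤ x (eˣ + 1)` for `x ≥ 0` (that is, `tanh (x / 2) ≤ x / 2`);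
the difference of the two sides vanishes at `0` and has derivative `1 - (1 - x) eˣ ≥ 0`.
-/

open Real Set

lemma Real.one_sub_mul_exp_le_one (x : ℝ) : (1 - x) * exp x ≤ 1 := by
  have h := mul_le_mul_of_nonneg_right (add_one_le_exp (-x)) (exp_pos x).le
  rwa [← exp_add, neg_add_cancel, exp_zero, neg_add_eq_sub] at h

lemma Real.two_mul_exp_sub_one_le_mul_exp_add_one {x : ℝ} (hx : 0 ≤ x) :
    2 * (exp x - 1) ≤ x * (exp x + 1) := by
  let g : ℝ → ℝ := fun y => y * (exp y + 1) - 2 * (exp y - 1)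
  have hg : ∀ y, HasDerivAt g (1 - (1 - y) * exp y) y := fun y =>
    (((hasDerivAt_id' y).mul ((hasDerivAt_exp y).add_const 1)).sub
      (((hasDerivAt_exp y).sub_const 1).const_mul 2)).congr_deriv (by ring)
  have hg_mono : MonotoneOn g (Ici 0) :=
    monotoneOn_of_hasDerivWithinAt_nonneg (convex_Ici 0)
      (fun y _ => (hg y).continuousAt.continuousWithinAt)
      (fun y _ => (hg y).hasDerivWithinAt)
      (fun y _ => sub_nonneg.2 (one_sub_mul_exp_le_one y))
  have h := hg_mono self_mem_Ici hx hx
  simp only [g, exp_zero] at h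
  linarith

lemma convexOn_div_exp_sub_one : ConvexOn ℝ (Ioi 0) (fun x : ℝ => x / (exp x - 1)) := by
  have hden : ∀ x ∈ Ioi (0 : ℝ), 0 < exp x - 1 := fun x hx => sub_pos.2 (one_lt_exp_iff.2 hx)
  let f' : ℝ → ℝ := fun x => (exp x - 1 - x * exp x) / (exp x - 1) ^ 2
  let f'' : ℝ → ℝ := fun x => exp x * (x * (exp x + 1) - 2 * (exp x - 1)) / (exp x - 1) ^ 3
  have hf' : ∀ x ∈ Ioi (0 : ℝ), HasDerivAt (fun x : ℝ => x / (exp x - 1)) (f' x) x :=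
    fun x hx => ((hasDerivAt_id' x).div ((hasDerivAt_exp x).sub_const 1)
      (hden x hx).ne').congr_deriv (by ring)
  have hf'' : ∀ x ∈ Ioi (0 : ℝ), HasDerivAt f' (f'' x) x := fun x hx =>
    ((((hasDerivAt_exp x).sub_const 1).sub ((hasDerivAt_id' x).mul (hasDerivAt_exp x))).div
      (((hasDerivAt_exp x).sub_const 1).pow 2) (pow_ne_zero 2 (hden x hx).ne')).congr_deriv (by
        have := (hden x hx).ne'
        simp only [f'', Pi.sub_apply, Pi.mul_apply, Pi.pow_apply]
        field_simp
        ring)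
  refine convexOn_of_hasDerivWithinAt2_nonneg (f' := f') (f'' := f'') (convex_Ioi 0)
    (fun x hx => (hf' x hx).continuousAt.continuousWithinAt) ?_ ?_ ?_ <;> rw [interior_Ioi]
  · exact fun x hx => (hf' x hx).hasDerivWithinAt
  · exact fun x hx => (hf'' x hx).hasDerivWithinAt
  · intro x hx
    have hnum := sub_nonneg.2 (two_mul_exp_sub_one_le_mul_exp_add_one (le_of_lt hx))
    exact div_nonneg (mul_nonneg (exp_pos x).le hnum) (pow_pos (hden x hx) 3).le

lemma ConvexOn.comp_const_mul_Ioi {f : ℝ → ℝ} (hf : ConvexOn ℝ (Ioi 0) f) {c : ℝ} (hc : 0 < c) :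
    ConvexOn ℝ (Ioi 0) (fun x => f (c * x)) := by
  have h := hf.comp_linearMap (LinearMap.mulLeft ℝ c)
  have hpre : ⇑(LinearMap.mulLeft ℝ c) ⁻¹' Ioi 0 = Ioi 0 := by
    ext x
    simp [hc]
  rwa [hpre] at h

/-- Lemma 2.3 (Balakrishnan et al., 2014): for fixed `t ∈ (0,1)`, the function
`τ(α) = α t^(α-1) / (1 - t^α)` is convex on `(0, ∞)`. -/
theorem tau_convexOn (t : ℝ) (ht0 : 0 < t) (ht1 : t < 1) :
    ConvexOn ℝ (Set.Ioi (0 : ℝ))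
      (fun α : ℝ => α * t ^ (α - 1) / (1 - t ^ α)) := by
  set c := -log t with hc_def
  have hc : 0 < c := neg_pos.2 (log_neg ht0 ht1)
  refine ((convexOn_div_exp_sub_one.comp_const_mul_Ioi hc).smul
    (inv_pos.2 (mul_pos ht0 hc)).le).congr fun α hα => ?_
  have hexp : exp (c * α) = (t ^ α)⁻¹ := by
    rw [← rpow_neg ht0.le, rpow_def_of_pos ht0, hc_def]
    ring_nf
  have htα : t ^ α < 1 := rpow_lt_one ht0.le ht1 hα
  have hc_ne : c ≠ 0 := hc.ne'
  have htα_pos : 0 < t ^ α := rpow_pos_of_pos ht0 α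
  simp only [smul_eq_mul, hexp, rpow_sub ht0, rpow_one]
  field_simp
end

section
/- Let n ≥ 1, let α = (α_1, …, α_n) and α* = (α*_1, …, α*_n) be n-tuples of positive real numbers each arranged in increasing order, and suppose α* is majorized by α. Then the function t ↦ [∏_{k=1}^n (1 − t^(α*_k))] / [∏_{k=1}^n (1 − t^(α_k))] is monotone nondecreasing on the open interval (0, 1). -/
/-!
Put `L = -log t > 0`. The logarithmic derivative of `1 - t ^ c` is `(t * log t)⁻¹ * h (L * c)`
with `h x = x / (exp x - 1)`, so the logarithm of the ratio has derivative
`(t * log t)⁻¹ * (∑ h (L * αs k) - ∑ h (L * α k))`. The function `h` is convex on `(0, ∞)`: its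
second derivative has the sign of `(x - 2) * exp x + x + 2 ≥ 0`. Hence Karamata's inequality,
proved by comparing `h` with its tangent lines at the points `L * αs k` and summing by parts,
gives `∑ h (L * αs k) ≤ ∑ h (L * α k)`, and the derivative is nonnegative.
-/

open Real Finset Set

theorem sum_range_mul_nonneg_of_monotone_of_partialSums_nonpos {n : ℕ} {c d : ℕ → ℝ}
    (hc : ∀ i, i + 1 < n → c i ≤ c (i + 1))
    (hd : ∀ i, 1 ≤ i → i ≤ n - 1 → ∑ k ∈ range i, d k ≤ 0)
    (hsum : ∑ k ∈ range n, d k = 0) :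
    0 ≤ ∑ k ∈ range n, c k * d k := by
  have hparts := sum_range_by_parts c d n
  simp only [smul_eq_mul] at hparts
  rw [hparts, hsum, mul_zero, zero_sub, neg_nonneg]
  refine sum_nonpos fun i hi => ?_
  have hi := mem_range.mp hi
  exact mul_nonpos_of_nonneg_of_nonpos (sub_nonneg.mpr (hc i (by omega)))
    (hd (i + 1) (by omega) (by omega))

theorem ConvexOn.deriv_mul_sub_le {s : Set ℝ} {g : ℝ → ℝ} (hg : ConvexOn ℝ s g) {x y : ℝ}
    (hx : x ∈ s) (hy : y ∈ s) (hgd : DifferentiableAt ℝ g x) :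
    deriv g x * (y - x) ≤ g y - g x := by
  rcases lt_trichotomy x y with hxy | rfl | hxy
  · have := hg.deriv_le_slope hx hy hxy hgd
    rwa [slope_def_field, le_div_iff₀ (sub_pos.mpr hxy)] at this
  · simp
  · have := hg.slope_le_deriv hy hx hxy hgd
    rw [slope_def_field, div_le_iff₀ (sub_pos.mpr hxy)] at this
    linarith

theorem ConvexOn.sum_le_sum_of_majorizes {s : Set ℝ} {g : ℝ → ℝ} (hg : ConvexOn ℝ s g)
    (hgd : ∀ x ∈ s, DifferentiableAt ℝ g x) {n : ℕ} {a b : ℕ → ℝ}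
    (ha : ∀ k < n, a k ∈ s) (hb : ∀ k < n, b k ∈ s)
    (hbmono : ∀ i j, i ≤ j → j < n → b i ≤ b j)
    (hmaj : ∀ i, 1 ≤ i → i ≤ n - 1 → ∑ k ∈ range i, a k ≤ ∑ k ∈ range i, b k)
    (hsum : ∑ k ∈ range n, b k = ∑ k ∈ range n, a k) :
    ∑ k ∈ range n, g (b k) ≤ ∑ k ∈ range n, g (a k) := by
  have habel : 0 ≤ ∑ k ∈ range n, deriv g (b k) * (a k - b k) := by
    refine sum_range_mul_nonneg_of_monotone_of_partialSums_nonpos (fun i hi => ?_)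
      (fun i hi1 hi => ?_) ?_
    · exact hg.monotoneOn_deriv hgd (hb i (by omega)) (hb (i + 1) hi)
        (hbmono i (i + 1) (by omega) hi)
    · rw [sum_sub_distrib, sub_nonpos]; exact hmaj i hi1 hi
    · rw [sum_sub_distrib, hsum, sub_self]
  have htangent : ∑ k ∈ range n, deriv g (b k) * (a k - b k) ≤
      ∑ k ∈ range n, (g (a k) - g (b k)) :=
    sum_le_sum fun k hk => hg.deriv_mul_sub_le (hb k (mem_range.mp hk))
      (ha k (mem_range.mp hk)) (hgd _ (hb k (mem_range.mp hk)))
  rw [sum_sub_distrib] at htangent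
  linarith

theorem sub_two_mul_exp_add_add_two_nonneg {x : ℝ} (hx : 0 ≤ x) :
    0 ≤ (x - 2) * exp x + x + 2 := by
  have hderiv : ∀ y, HasDerivAt (fun y => (y - 2) * exp y + y + 2) ((y - 1) * exp y + 1) y :=
    fun y => ((((hasDerivAt_id' y).sub_const 2).mul (hasDerivAt_exp y)).add
      (hasDerivAt_id' y)).add_const 2 |>.congr_deriv (by ring)
  -- `(1 - y) * exp y ≤ 1` is `1 - y ≤ exp (-y)`
  have hderiv_nonneg : ∀ y : ℝ, 0 ≤ (y - 1) * exp y + 1 := fun y => by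
    have h := add_one_le_exp (-y)
    have h' := mul_le_mul_of_nonneg_right h (exp_pos y).le
    rw [← exp_add, neg_add_cancel, exp_zero] at h'
    linarith
  simpa using monotone_of_hasDerivAt_nonneg hderiv hderiv_nonneg hx

noncomputable def divExpSubOne (x : ℝ) : ℝ := x / (exp x - 1)

theorem hasDerivAt_divExpSubOne {x : ℝ} (hx : x ≠ 0) :
    HasDerivAt divExpSubOne ((exp x - 1 - x * exp x) / (exp x - 1) ^ 2) x := by
  have hne : exp x - 1 ≠ 0 := by rw [sub_ne_zero, Ne, exp_eq_one_iff]; exact hx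
  exact ((hasDerivAt_id x).div ((hasDerivAt_exp x).sub_const 1) hne).congr_deriv (by simp)

theorem hasDerivAt_deriv_divExpSubOne {x : ℝ} (hx : x ≠ 0) :
    HasDerivAt (fun x => (exp x - 1 - x * exp x) / (exp x - 1) ^ 2)
      (exp x * ((x - 2) * exp x + x + 2) / (exp x - 1) ^ 3) x := by
  have hne : exp x - 1 ≠ 0 := by rw [sub_ne_zero, Ne, exp_eq_one_iff]; exact hx
  have hnum : HasDerivAt (fun x => exp x - 1 - x * exp x) (exp x - (1 * exp x + x * exp x)) x :=
    ((hasDerivAt_exp x).sub_const 1).sub ((hasDerivAt_id' x).mul (hasDerivAt_exp x))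
  have hden : HasDerivAt (fun x => (exp x - 1) ^ 2) (2 * (exp x - 1) ^ 1 * exp x) x :=
    ((hasDerivAt_exp x).sub_const 1).pow 2
  refine (hnum.div hden (pow_ne_zero 2 hne)).congr_deriv ?_
  field_simp
  ring

theorem convexOn_divExpSubOne : ConvexOn ℝ (Ioi 0) divExpSubOne := by
  refine convexOn_of_hasDerivWithinAt2_nonneg
    (f' := fun x => (exp x - 1 - x * exp x) / (exp x - 1) ^ 2)
    (f'' := fun x => exp x * ((x - 2) * exp x + x + 2) / (exp x - 1) ^ 3) (convex_Ioi 0)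
    (fun x hx => (hasDerivAt_divExpSubOne (ne_of_gt hx)).continuousAt.continuousWithinAt)
    (fun x hx => ?_) (fun x hx => ?_) (fun x hx => ?_) <;> rw [interior_Ioi] at hx
  · exact (hasDerivAt_divExpSubOne hx.ne').hasDerivWithinAt
  · exact (hasDerivAt_deriv_divExpSubOne hx.ne').hasDerivWithinAt
  · have : 0 < exp x - 1 := by rw [sub_pos]; exact one_lt_exp_iff.mpr hx
    have := sub_two_mul_exp_add_add_two_nonneg hx.le
    positivity

theorem sum_divExpSubOne_mul_le {n : ℕ} {α αs : ℕ → ℝ} {L : ℝ} (hL : 0 < L)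
    (hαpos : ∀ k < n, 0 < α k) (hαspos : ∀ k < n, 0 < αs k)
    (hαsmono : ∀ i j, i ≤ j → j < n → αs i ≤ αs j)
    (hmaj : ∀ i, 1 ≤ i → i ≤ n - 1 → ∑ k ∈ range i, α k ≤ ∑ k ∈ range i, αs k)
    (hsum : ∑ k ∈ range n, αs k = ∑ k ∈ range n, α k) :
    ∑ k ∈ range n, divExpSubOne (L * αs k) ≤ ∑ k ∈ range n, divExpSubOne (L * α k) :=
  convexOn_divExpSubOne.sum_le_sum_of_majorizes
    (fun x hx => (hasDerivAt_divExpSubOne (ne_of_gt hx)).differentiableAt)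
    (fun k hk => mul_pos hL (hαpos k hk)) (fun k hk => mul_pos hL (hαspos k hk))
    (fun i j hij hj => mul_le_mul_of_nonneg_left (hαsmono i j hij hj) hL.le)
    (fun i hi1 hi => by
      rw [← mul_sum, ← mul_sum]; exact mul_le_mul_of_nonneg_left (hmaj i hi1 hi) hL.le)
    (by rw [← mul_sum, ← mul_sum, hsum])

theorem one_sub_rpow_pos {c t : ℝ} (hc : 0 < c) (ht0 : 0 < t) (ht1 : t < 1) :
    0 < 1 - t ^ c :=
  sub_pos.mpr (rpow_lt_one ht0.le ht1 hc)

theorem hasDerivAt_log_one_sub_rpow {c t : ℝ} (hc : 0 < c) (ht0 : 0 < t) (ht1 : t < 1) :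
    HasDerivAt (fun t => log (1 - t ^ c)) ((t * log t)⁻¹ * divExpSubOne (-log t * c)) t := by
  have hlog : log t ≠ 0 := (log_neg ht0 ht1).ne
  have hpos := one_sub_rpow_pos hc ht0 ht1
  refine (((hasDerivAt_rpow_const (Or.inl ht0.ne')).const_sub 1).log hpos.ne').congr_deriv ?_
  have hexp : exp (-log t * c) = (t ^ c)⁻¹ := by rw [neg_mul, exp_neg, ← rpow_def_of_pos ht0]
  have hinv : (t ^ c)⁻¹ - 1 = (1 - t ^ c) / t ^ c := by
    field_simp [(rpow_pos_of_pos ht0 c).ne']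
  rw [divExpSubOne, hexp, hinv, rpow_sub_one ht0.ne']
  field_simp

theorem survival_ratio_monotoneOn_general (n : ℕ) (α αs : ℕ → ℝ)
    (hαpos : ∀ k < n, 0 < α k) (hαspos : ∀ k < n, 0 < αs k)
    (hαsmono : ∀ i, ∀ j, i ≤ j → j < n → αs i ≤ αs j)
    (hmaj : ∀ i, 1 ≤ i → i ≤ n - 1 →
      ∑ k ∈ Finset.range i, α k ≤ ∑ k ∈ Finset.range i, αs k)
    (hsum : ∑ k ∈ Finset.range n, αs k = ∑ k ∈ Finset.range n, α k) :
    MonotoneOn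
      (fun t : ℝ =>
        (∏ k ∈ Finset.range n, (1 - t ^ αs k)) /
          (∏ k ∈ Finset.range n, (1 - t ^ α k)))
      (Set.Ioo (0 : ℝ) 1) := by
  set F : ℝ → ℝ := fun t =>
    ∑ k ∈ range n, log (1 - t ^ αs k) - ∑ k ∈ range n, log (1 - t ^ α k)
  have hF : ∀ t ∈ Ioo (0 : ℝ) 1, HasDerivAt F ((t * log t)⁻¹ *
      (∑ k ∈ range n, divExpSubOne (-log t * αs k) -
        ∑ k ∈ range n, divExpSubOne (-log t * α k))) t := fun t ht => by
    rw [mul_sub, mul_sum, mul_sum]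
    exact (HasDerivAt.fun_sum fun k hk => hasDerivAt_log_one_sub_rpow
        (hαspos k (mem_range.mp hk)) ht.1 ht.2).sub
      (HasDerivAt.fun_sum fun k hk => hasDerivAt_log_one_sub_rpow
        (hαpos k (mem_range.mp hk)) ht.1 ht.2)
  have hFmono : MonotoneOn F (Ioo 0 1) := by
    refine monotoneOn_of_hasDerivWithinAt_nonneg (convex_Ioo 0 1)
      (fun t ht => (hF t ht).continuousAt.continuousWithinAt)
      (fun t ht => (hF t (interior_subset ht)).hasDerivWithinAt) fun t ht => ?_
    rw [interior_Ioo] at ht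
    have hlog := log_neg ht.1 ht.2
    exact mul_nonneg_of_nonpos_of_nonpos (inv_nonpos.mpr (mul_neg_of_pos_of_neg ht.1 hlog).le)
      (sub_nonpos.mpr <|
        sum_divExpSubOne_mul_le (neg_pos.mpr hlog) hαpos hαspos hαsmono hmaj hsum)
  have hratio : ∀ t ∈ Ioo (0 : ℝ) 1, (∏ k ∈ range n, (1 - t ^ αs k)) /
      (∏ k ∈ range n, (1 - t ^ α k)) = exp (F t) := fun t ht => by
    rw [exp_sub, exp_sum, exp_sum]
    congr 1 <;> refine prod_congr rfl fun k hk => (exp_log (one_sub_rpow_pos ?_ ht.1 ht.2)).symm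
    exacts [hαspos k (mem_range.mp hk), hαpos k (mem_range.mp hk)]
  exact (exp_monotone.comp_monotoneOn hFmono).congr fun t ht => (hratio t ht).symm

/-- Theorem 3.1 (hazard rate order of series systems), analytic form: if the increasing
tuple `αs` is majorized by the increasing tuple `α` (both with positive entries), then
`t ↦ (∏ (1 - t^(αs_k))) / (∏ (1 - t^(α_k)))` is nondecreasing on `(0,1)`. -/
theorem survival_ratio_monotoneOn (n : ℕ) (hn : 1 ≤ n) (α αs : ℕ → ℝ)
    (hαpos : ∀ k < n, 0 < α k) (hαspos : ∀ k < n, 0 < αs k)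
    (hαmono : ∀ i, ∀ j, i ≤ j → j < n → α i ≤ α j)
    (hαsmono : ∀ i, ∀ j, i ≤ j → j < n → αs i ≤ αs j)
    (hmaj : ∀ i, 1 ≤ i → i ≤ n - 1 →
      ∑ k ∈ Finset.range i, α k ≤ ∑ k ∈ Finset.range i, αs k)
    (hsum : ∑ k ∈ Finset.range n, αs k = ∑ k ∈ Finset.range n, α k) :
    MonotoneOn
      (fun t : ℝ =>
        (∏ k ∈ Finset.range n, (1 - t ^ αs k)) /
          (∏ k ∈ Finset.range n, (1 - t ^ α k)))
      (Set.Ioo (0 : ℝ) 1) :=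
  survival_ratio_monotoneOn_general n α αs hαpos hαspos hαsmono hmaj hsum
end

section
/- Let n ≥ 1, let α = (α_1, …, α_n) and α* = (α*_1, …, α*_n) be n-tuples of positive real numbers each arranged in increasing order, and suppose α* is majorized by α. Then for every real number t with 0 ≤ t ≤ 1, ∏_{k=1}^n (1 − t^(α_k)) ≤ ∏_{k=1}^n (1 − t^(α*_k)). -/
/-!
For `0 < t < 1` the map `a ↦ log (1 - t ^ a)` is concave on `(0, ∞)`, with supergradient
`a ↦ -log t * t ^ a / (1 - t ^ a)`. The inequality is Karamata's inequality for this concave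
function, proved by comparing each `log (1 - t ^ α k)` with the tangent line at `αs k` and then
summing by parts: the slopes along the increasing tuple `αs` decrease, while the partial sums of
`α - αs` are nonpositive and the full sum vanishes.
-/

open Finset Real

lemma sum_range_mul_nonpos_of_antitone {c e : ℕ → ℝ} {n : ℕ}
    (hc : ∀ i, i + 1 < n → c (i + 1) ≤ c i)
    (he : ∀ i < n, ∑ k ∈ range i, e k ≤ 0) (hen : ∑ k ∈ range n, e k = 0) :
    ∑ k ∈ range n, c k * e k ≤ 0 := by
  have hparts := sum_range_by_parts c e n
  simp only [smul_eq_mul, hen, mul_zero, zero_sub] at hparts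
  rw [hparts, neg_nonpos]
  refine sum_nonneg fun i hi => mul_nonneg_of_nonpos_of_nonpos ?_ ?_
  · exact sub_nonpos.2 (hc i (by grind))
  · exact he (i + 1) (by grind)

def IsSupergradientOn (s : Set ℝ) (f g : ℝ → ℝ) : Prop :=
  ∀ a ∈ s, ∀ b ∈ s, f b ≤ f a + g a * (b - a)

namespace IsSupergradientOn

variable {s : Set ℝ} {f g : ℝ → ℝ}

lemma antitoneOn (h : IsSupergradientOn s f g) : AntitoneOn g s := by
  intro a ha b hb hab
  rcases hab.eq_or_lt with rfl | hlt
  · rfl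
  nlinarith [h a ha b hb, h b hb a ha]

lemma sum_le_sum_of_majorized (h : IsSupergradientOn s f g) {n : ℕ} {x y : ℕ → ℝ}
    (hx : ∀ k < n, x k ∈ s) (hy : ∀ k < n, y k ∈ s) (hy_mono : ∀ k, k + 1 < n → y k ≤ y (k + 1))
    (hmaj : ∀ i < n, ∑ k ∈ range i, x k ≤ ∑ k ∈ range i, y k)
    (hsum : ∑ k ∈ range n, x k = ∑ k ∈ range n, y k) :
    ∑ k ∈ range n, f (x k) ≤ ∑ k ∈ range n, f (y k) := by
  have habel : ∑ k ∈ range n, g (y k) * (x k - y k) ≤ 0 := by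
    refine sum_range_mul_nonpos_of_antitone (fun i hi => ?_) (fun i hi => ?_) ?_
    · exact h.antitoneOn (hy i (by omega)) (hy (i + 1) hi) (hy_mono i hi)
    · rw [sum_sub_distrib]
      linarith [hmaj i hi]
    · rw [sum_sub_distrib, hsum, sub_self]
  calc ∑ k ∈ range n, f (x k)
      ≤ ∑ k ∈ range n, (f (y k) + g (y k) * (x k - y k)) :=
        sum_le_sum fun k hk => h _ (hy k (mem_range.1 hk)) _ (hx k (mem_range.1 hk))
    _ = ∑ k ∈ range n, f (y k) + ∑ k ∈ range n, g (y k) * (x k - y k) := sum_add_distrib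
    _ ≤ ∑ k ∈ range n, f (y k) := add_le_of_nonpos_right habel

end IsSupergradientOn

lemma isSupergradientOn_log_one_sub_rpow {t : ℝ} (h0 : 0 < t) (h1 : t < 1) :
    IsSupergradientOn (Set.Ioi 0) (fun a => log (1 - t ^ a))
      (fun a => -log t * t ^ a / (1 - t ^ a)) := by
  intro a ha b hb
  have hta : 0 < t ^ a := rpow_pos_of_pos h0 a
  have h1a : 0 < 1 - t ^ a := sub_pos.2 (rpow_lt_one h0.le h1 ha)
  have h1b : 0 < 1 - t ^ b := sub_pos.2 (rpow_lt_one h0.le h1 hb)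
  have hdrop : t ^ a - t ^ b ≤ -log t * t ^ a * (b - a) := by
    have hb_eq : t ^ b = t ^ a * exp (log t * (b - a)) := by
      rw [← rpow_def_of_pos h0, ← rpow_add h0]
      ring_nf
    nlinarith [mul_le_mul_of_nonneg_left (add_one_le_exp (log t * (b - a))) hta.le]
  calc log (1 - t ^ b)
      = log (1 - t ^ a) + log ((1 - t ^ b) / (1 - t ^ a)) := by
        rw [log_div h1b.ne' h1a.ne']
        ring
    _ ≤ log (1 - t ^ a) + ((1 - t ^ b) / (1 - t ^ a) - 1) := by
        gcongr
        exact log_le_sub_one_of_pos (div_pos h1b h1a)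
    _ = log (1 - t ^ a) + (t ^ a - t ^ b) / (1 - t ^ a) := by
        field_simp
        ring
    _ ≤ log (1 - t ^ a) + -log t * t ^ a / (1 - t ^ a) * (b - a) := by
        rw [div_mul_eq_mul_div]
        gcongr

theorem prod_survival_le_of_majorized_general (n : ℕ) (α αs : ℕ → ℝ)
    (hαpos : ∀ k < n, 0 < α k) (hαspos : ∀ k < n, 0 < αs k)
    (hαsmono : ∀ i, ∀ j, i ≤ j → j < n → αs i ≤ αs j)
    (hmaj : ∀ i, 1 ≤ i → i ≤ n - 1 →
      ∑ k ∈ Finset.range i, α k ≤ ∑ k ∈ Finset.range i, αs k)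
    (hsum : ∑ k ∈ Finset.range n, αs k = ∑ k ∈ Finset.range n, α k)
    (t : ℝ) (ht0 : 0 ≤ t) (ht1 : t ≤ 1) :
    ∏ k ∈ Finset.range n, (1 - t ^ α k) ≤
      ∏ k ∈ Finset.range n, (1 - t ^ αs k) := by
  rcases ht0.eq_or_lt with rfl | h0
  · have hone {a : ℕ → ℝ} (ha : ∀ k < n, 0 < a k) : ∏ k ∈ range n, (1 - (0 : ℝ) ^ a k) = 1 :=
      prod_eq_one fun k hk => by rw [zero_rpow (ha k (mem_range.1 hk)).ne', sub_zero]
    rw [hone hαpos, hone hαspos]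
  rcases ht1.eq_or_lt with rfl | h1
  · simp only [one_rpow, sub_self, le_refl]
  have hlog := (isSupergradientOn_log_one_sub_rpow h0 h1).sum_le_sum_of_majorized
    (x := α) (y := αs) hαpos hαspos (fun k hk => hαsmono k (k + 1) k.le_succ hk)
    (fun i hi => by
      rcases i with _ | i
      · rfl
      · exact hmaj _ (by omega) (by omega))
    hsum.symm
  have hpos {a : ℕ → ℝ} (ha : ∀ k < n, 0 < a k) : ∀ k ∈ range n, 0 < 1 - t ^ a k :=
    fun k hk => sub_pos.2 (rpow_lt_one h0.le h1 (ha k (mem_range.1 hk)))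
  rw [← log_le_log_iff (prod_pos (hpos hαpos)) (prod_pos (hpos hαspos)),
    log_prod fun k hk => (hpos hαpos k hk).ne', log_prod fun k hk => (hpos hαspos k hk).ne']
  exact hlog

/-- Usual stochastic order of series systems implied by Theorem 3.1: if the increasing
tuple `αs` is majorized by the increasing tuple `α` (both with positive entries), then for
every `t ∈ [0,1]`, `∏ (1 - t^(α_k)) ≤ ∏ (1 - t^(αs_k))`. -/
theorem prod_survival_le_of_majorized (n : ℕ) (hn : 1 ≤ n) (α αs : ℕ → ℝ)
    (hαpos : ∀ k < n, 0 < α k) (hαspos : ∀ k < n, 0 < αs k)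
    (hαmono : ∀ i, ∀ j, i ≤ j → j < n → α i ≤ α j)
    (hαsmono : ∀ i, ∀ j, i ≤ j → j < n → αs i ≤ αs j)
    (hmaj : ∀ i, 1 ≤ i → i ≤ n - 1 →
      ∑ k ∈ Finset.range i, α k ≤ ∑ k ∈ Finset.range i, αs k)
    (hsum : ∑ k ∈ Finset.range n, αs k = ∑ k ∈ Finset.range n, α k)
    (t : ℝ) (ht0 : 0 ≤ t) (ht1 : t ≤ 1) :
    ∏ k ∈ Finset.range n, (1 - t ^ α k) ≤
      ∏ k ∈ Finset.range n, (1 - t ^ αs k) :=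
  prod_survival_le_of_majorized_general n α αs hαpos hαspos hαsmono hmaj hsum t ht0 ht1
end

section
/- Let n ≥ 1, let α > 0, let θ = (θ_1, …, θ_n) and θ* = (θ*_1, …, θ*_n) be n-tuples of positive real numbers each arranged in increasing order with θ majorized by θ*, and let u be a real number with 0 < u < 1. Then ∏_{k=1}^n (u^(θ*_k) (2 − u^(θ*_k)))^α ≤ ∏_{k=1}^n (u^(θ_k) (2 − u^(θ_k)))^α. -/
/-!
With `f t = log (u ^ t * (2 - u ^ t))`, the claim is `∑ f (θs k) ≤ ∑ f (θ k)` after taking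
logarithms and `α`-th powers. `f` is concave on `[0, ∞)`, its derivative
`2 log u (1 - u ^ t) / (2 - u ^ t)` being decreasing, so this is Karamata's inequality. Only `θ`
has to be sorted: summing the tangent bounds `f (θs k) ≤ f (θ k) + f' (θ k) (θs k - θ k)`, the
error term is `≤ 0` by Abel summation, since `f' (θ k)` decreases in `k` while the partial sums of
`θs - θ` are `≤ 0` and their total is `0`.
-/

open Real Finset Set

theorem sum_mul_nonpos_of_antitoneOn {n : ℕ} {c d : ℕ → ℝ} (hc : AntitoneOn c (Set.Iio n))
    (hpartial : ∀ i < n, ∑ k ∈ range i, d k ≤ 0) (htotal : ∑ k ∈ range n, d k = 0) :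
    ∑ k ∈ range n, c k * d k ≤ 0 := by
  have hby_parts := sum_range_by_parts c d n
  simp only [smul_eq_mul, htotal, mul_zero, zero_sub] at hby_parts
  rw [hby_parts, neg_nonpos]
  refine sum_nonneg fun i hi => mul_nonneg_of_nonpos_of_nonpos ?_ (hpartial _ ?_)
  · have hi : i + 1 < n := by have := mem_range.1 hi; omega
    exact sub_nonpos.2 (hc (mem_Iio.2 (by omega)) (mem_Iio.2 hi) (Nat.le_succ i))
  · have := mem_range.1 hi; omega

theorem ConcaveOn.le_add_deriv_mul_sub {S : Set ℝ} {f : ℝ → ℝ} (hf : ConcaveOn ℝ S f)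
    {x y : ℝ} (hx : x ∈ S) (hy : y ∈ S) (hfd : DifferentiableAt ℝ f x) :
    f y ≤ f x + deriv f x * (y - x) := by
  rcases lt_trichotomy x y with hxy | rfl | hyx
  · have := hf.slope_le_deriv hx hy hxy hfd
    rw [slope_def_field, div_le_iff₀ (sub_pos.2 hxy)] at this
    linarith
  · simp
  · have := hf.deriv_le_slope hy hx hyx hfd
    rw [slope_def_field, le_div_iff₀ (sub_pos.2 hyx)] at this
    linarith

theorem ConcaveOn.sum_le_sum_of_partial_sums_le {S : Set ℝ} {f : ℝ → ℝ}
    (hf : ConcaveOn ℝ S f) (hfd : ∀ x ∈ S, DifferentiableAt ℝ f x) {n : ℕ} {x y : ℕ → ℝ}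
    (hx : ∀ k < n, x k ∈ S) (hy : ∀ k < n, y k ∈ S) (hmono : MonotoneOn x (Set.Iio n))
    (hpartial : ∀ i < n, ∑ k ∈ range i, y k ≤ ∑ k ∈ range i, x k)
    (htotal : ∑ k ∈ range n, x k = ∑ k ∈ range n, y k) :
    ∑ k ∈ range n, f (y k) ≤ ∑ k ∈ range n, f (x k) := by
  have hderiv_anti : AntitoneOn (fun k => deriv f (x k)) (Set.Iio n) :=
    fun i hi j hj hij => hf.antitoneOn_deriv hfd (hx i hi) (hx j hj) (hmono hi hj hij)
  have habel : ∑ k ∈ range n, deriv f (x k) * (y k - x k) ≤ 0 :=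
    sum_mul_nonpos_of_antitoneOn hderiv_anti
      (fun i hi => by simpa only [sum_sub_distrib, sub_nonpos] using hpartial i hi)
      (by rw [sum_sub_distrib, htotal, sub_self])
  calc ∑ k ∈ range n, f (y k)
      ≤ ∑ k ∈ range n, (f (x k) + deriv f (x k) * (y k - x k)) :=
        sum_le_sum fun k hk => hf.le_add_deriv_mul_sub (hx k (mem_range.1 hk))
          (hy k (mem_range.1 hk)) (hfd _ (hx k (mem_range.1 hk)))
    _ = ∑ k ∈ range n, f (x k) + ∑ k ∈ range n, deriv f (x k) * (y k - x k) := sum_add_distrib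
    _ ≤ ∑ k ∈ range n, f (x k) := add_le_of_nonpos_right habel

/-- The Topp-Leone distribution function with shape `t` where the baseline CDF has value `u`. -/
noncomputable def toppLeone (u t : ℝ) : ℝ := u ^ t * (2 - u ^ t)

section toppLeone

variable {u t : ℝ}

theorem toppLeone_pos (hu0 : 0 < u) (hu1 : u ≤ 1) (ht : 0 ≤ t) : 0 < toppLeone u t :=
  mul_pos (rpow_pos_of_pos hu0 t) (by linarith [rpow_le_one hu0.le hu1 ht])

theorem hasDerivAt_log_toppLeone (hu0 : 0 < u) (hu1 : u ≤ 1) (ht : 0 ≤ t) :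
    HasDerivAt (fun s => log (toppLeone u s)) (2 * log u * (1 - u ^ t) / (2 - u ^ t)) t := by
  have hpow := (hasStrictDerivAt_const_rpow hu0 t).hasDerivAt
  refine ((hpow.mul (hpow.const_sub 2)).log (toppLeone_pos hu0 hu1 ht).ne').congr_deriv ?_
  have hle := rpow_le_one hu0.le hu1 ht
  have hne : u ^ t ≠ 0 := (rpow_pos_of_pos hu0 t).ne'
  have hne' : 2 - u ^ t ≠ 0 := by linarith
  simp only [Pi.mul_apply]
  field_simp
  ring

theorem concaveOn_log_toppLeone (hu0 : 0 < u) (hu1 : u ≤ 1) :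
    ConcaveOn ℝ (Ici 0) (fun t => log (toppLeone u t)) := by
  have hderiv := fun t (ht : t ∈ Ici (0 : ℝ)) => hasDerivAt_log_toppLeone hu0 hu1 ht
  refine AntitoneOn.concaveOn_of_deriv (convex_Ici 0)
    (fun t ht => (hderiv t ht).continuousAt.continuousWithinAt)
    (fun t ht => (hderiv t (interior_subset ht)).differentiableAt.differentiableWithinAt) ?_
  rw [interior_Ici]
  intro s hs t ht hst
  simp only [(hderiv s (mem_Ici.2 hs.le)).deriv, (hderiv t (mem_Ici.2 ht.le)).deriv]
  have hts : u ^ t ≤ u ^ s := rpow_le_rpow_of_exponent_ge hu0 hu1 hst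
  have hs1 : u ^ s ≤ 1 := rpow_le_one hu0.le hu1 hs.le
  have hL : log u ≤ 0 := log_nonpos hu0.le hu1
  rw [div_le_div_iff₀ (by linarith) (by linarith)]
  nlinarith [mul_nonneg (neg_nonneg.2 hL) (sub_nonneg.2 hts)]

end toppLeone

theorem prod_cdf_le_of_majorized_general (n : ℕ) (α : ℝ) (hα : 0 < α)
    (θ θs : ℕ → ℝ)
    (hθpos : ∀ k < n, 0 < θ k) (hθspos : ∀ k < n, 0 < θs k)
    (hθmono : ∀ i, ∀ j, i ≤ j → j < n → θ i ≤ θ j)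
    (hmaj : ∀ i, 1 ≤ i → i ≤ n - 1 →
      ∑ k ∈ Finset.range i, θs k ≤ ∑ k ∈ Finset.range i, θ k)
    (hsum : ∑ k ∈ Finset.range n, θ k = ∑ k ∈ Finset.range n, θs k)
    (u : ℝ) (hu0 : 0 < u) (hu1 : u < 1) :
    ∏ k ∈ Finset.range n, (u ^ θs k * (2 - u ^ θs k)) ^ α ≤
      ∏ k ∈ Finset.range n, (u ^ θ k * (2 - u ^ θ k)) ^ α := by
  have hpos : ∀ x : ℕ → ℝ, (∀ k < n, 0 < x k) → ∀ k ∈ range n, 0 < toppLeone u (x k) :=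
    fun x hx k hk => toppLeone_pos hu0 hu1.le (hx k (mem_range.1 hk)).le
  have hsum_log : ∑ k ∈ range n, log (toppLeone u (θs k)) ≤
      ∑ k ∈ range n, log (toppLeone u (θ k)) :=
    (concaveOn_log_toppLeone hu0 hu1.le).sum_le_sum_of_partial_sums_le
      (fun t ht => (hasDerivAt_log_toppLeone hu0 hu1.le ht).differentiableAt)
      (fun k hk => (hθpos k hk).le) (fun k hk => (hθspos k hk).le)
      (fun i _ j hj hij => hθmono i j hij hj)
      (fun i hi => by
        rcases Nat.eq_zero_or_pos i with rfl | hi0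
        · simp
        · exact hmaj i hi0 (by omega))
      hsum
  have hprod : ∏ k ∈ range n, toppLeone u (θs k) ≤ ∏ k ∈ range n, toppLeone u (θ k) := by
    rwa [← log_le_log_iff (prod_pos (hpos θs hθspos)) (prod_pos (hpos θ hθpos)),
      log_prod fun k hk => (hpos θs hθspos k hk).ne',
      log_prod fun k hk => (hpos θ hθpos k hk).ne']
  change ∏ k ∈ range n, toppLeone u (θs k) ^ α ≤ ∏ k ∈ range n, toppLeone u (θ k) ^ α
  rw [finsetProd_rpow _ _ fun k hk => (hpos θs hθspos k hk).le,
    finsetProd_rpow _ _ fun k hk => (hpos θ hθpos k hk).le]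
  exact rpow_le_rpow (prod_pos (hpos θs hθspos)).le hprod hα.le

/-- Corollary 3.1 stated pointwise: if the increasing tuple `θ` is majorized by the
increasing tuple `θs` (both with positive entries), then for every `u ∈ (0,1)` and `α > 0`,
`∏ (u^(θs_k)(2 - u^(θs_k)))^α ≤ ∏ (u^(θ_k)(2 - u^(θ_k)))^α`. -/
theorem prod_cdf_le_of_majorized (n : ℕ) (hn : 1 ≤ n) (α : ℝ) (hα : 0 < α)
    (θ θs : ℕ → ℝ)
    (hθpos : ∀ k < n, 0 < θ k) (hθspos : ∀ k < n, 0 < θs k)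
    (hθmono : ∀ i, ∀ j, i ≤ j → j < n → θ i ≤ θ j)
    (hθsmono : ∀ i, ∀ j, i ≤ j → j < n → θs i ≤ θs j)
    (hmaj : ∀ i, 1 ≤ i → i ≤ n - 1 →
      ∑ k ∈ Finset.range i, θs k ≤ ∑ k ∈ Finset.range i, θ k)
    (hsum : ∑ k ∈ Finset.range n, θ k = ∑ k ∈ Finset.range n, θs k)
    (u : ℝ) (hu0 : 0 < u) (hu1 : u < 1) :
    ∏ k ∈ Finset.range n, (u ^ θs k * (2 - u ^ θs k)) ^ α ≤
      ∏ k ∈ Finset.range n, (u ^ θ k * (2 - u ^ θ k)) ^ α :=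
  prod_cdf_le_of_majorized_general n α hα θ θs hθpos hθspos hθmono hmaj hsum u hu0 hu1
end

section
/- Let n ≥ 1, let α > 0, let θ_1, …, θ_n and θ*_1, …, θ*_n be positive real numbers with θ_k ≤ θ*_k for every k = 1, …, n, and let u be a real number with 0 < u < 1. Then ∏_{k=1}^n (u^(θ*_k) (2 − u^(θ*_k)))^α ≤ ∏_{k=1}^n (u^(θ_k) (2 − u^(θ_k)))^α. -/
/-! Each factor is `g (u ^ θ_k) ^ α` with `g t = t (2 - t)`. Since `g` increases on `(-∞, 1]` and
`θ ↦ u ^ θ` decreases from `1` on `[0, ∞)`, each factor decreases in `θ_k`; the factors are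
nonnegative, so the product decreases as well. -/

lemma monotoneOn_mul_two_sub : MonotoneOn (fun t : ℝ => t * (2 - t)) (Set.Iic 1) := by
  intro a _ b hb hab
  nlinarith [Set.mem_Iic.mp hb]

lemma rpow_mul_two_sub_rpow_nonneg {u θ : ℝ} (hu0 : 0 ≤ u) (hu1 : u ≤ 1) (hθ : 0 ≤ θ) :
    0 ≤ u ^ θ * (2 - u ^ θ) := by
  nlinarith [Real.rpow_le_one hu0 hu1 hθ, Real.rpow_nonneg hu0 θ]

lemma rpow_mul_two_sub_rpow_le_of_le {u θ θ' : ℝ} (hu0 : 0 < u) (hu1 : u ≤ 1) (hθ : 0 ≤ θ)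
    (hθθ' : θ ≤ θ') : u ^ θ' * (2 - u ^ θ') ≤ u ^ θ * (2 - u ^ θ) := by
  have hle_one : u ^ θ ≤ 1 := Real.rpow_le_one hu0.le hu1 hθ
  have hanti : u ^ θ' ≤ u ^ θ := Real.rpow_le_rpow_of_exponent_ge hu0 hu1 hθθ'
  exact monotoneOn_mul_two_sub (hanti.trans hle_one) hle_one hanti

theorem prod_cdf_le_of_le_general (n : ℕ) (α : ℝ) (hα : 0 < α)
    (θ θs : ℕ → ℝ)
    (hθpos : ∀ k < n, 0 < θ k)
    (hle : ∀ k < n, θ k ≤ θs k)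
    (u : ℝ) (hu0 : 0 < u) (hu1 : u < 1) :
    ∏ k ∈ Finset.range n, (u ^ θs k * (2 - u ^ θs k)) ^ α ≤
      ∏ k ∈ Finset.range n, (u ^ θ k * (2 - u ^ θ k)) ^ α := by
  have factor_nonneg : ∀ k < n, 0 ≤ u ^ θs k * (2 - u ^ θs k) := fun k hk =>
    rpow_mul_two_sub_rpow_nonneg hu0.le hu1.le ((hθpos k hk).le.trans (hle k hk))
  refine Finset.prod_le_prod
    (fun k hk => Real.rpow_nonneg (factor_nonneg k (Finset.mem_range.mp hk)) α) fun k hk => ?_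
  rw [Finset.mem_range] at hk
  exact Real.rpow_le_rpow (factor_nonneg k hk)
    (rpow_mul_two_sub_rpow_le_of_le hu0 hu1.le (hθpos k hk).le (hle k hk)) hα.le

/-- Theorem 3.3 stated pointwise: componentwise domination `θ_k ≤ θs_k` of positive scale
parameters implies `∏ (u^(θs_k)(2 - u^(θs_k)))^α ≤ ∏ (u^(θ_k)(2 - u^(θ_k)))^α` for
`u ∈ (0,1)` and `α > 0`. -/
theorem prod_cdf_le_of_le (n : ℕ) (hn : 1 ≤ n) (α : ℝ) (hα : 0 < α)
    (θ θs : ℕ → ℝ)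
    (hθpos : ∀ k < n, 0 < θ k) (hθspos : ∀ k < n, 0 < θs k)
    (hle : ∀ k < n, θ k ≤ θs k)
    (u : ℝ) (hu0 : 0 < u) (hu1 : u < 1) :
    ∏ k ∈ Finset.range n, (u ^ θs k * (2 - u ^ θs k)) ^ α ≤
      ∏ k ∈ Finset.range n, (u ^ θ k * (2 - u ^ θ k)) ^ α :=
  prod_cdf_le_of_le_general n α hα θ θs hθpos hle u hu0 hu1
end

section
/- Let n ≥ 1, let θ > 0, let α = (α_1, …, α_n) and α* = (α*_1, …, α*_n) be n-tuples of positive real numbers each arranged in increasing order with α* majorized by α, and let u_1, u_2 be real numbers with 0 ≤ u_2 ≤ u_1 ≤ 1. Then ∏_{k=1}^n [1 − (u_1^θ (2 − u_1^θ))^(α_k)] ≤ ∏_{k=1}^n [1 − (u_2^θ (2 − u_2^θ))^(α*_k)]. -/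
/-!
For `0 < t < 1` the function `a ↦ log (1 - t ^ a)` is concave on `(0, ∞)`, so by the
Karamata (Tomić–Weyl) inequality `∑ log (1 - t ^ α k) ≤ ∑ log (1 - t ^ αs k)` whenever `αs` is
increasing and majorized by `α`; exponentiating gives the comparison of the products at a common
`t`. Moreover `u ↦ u ^ θ (2 - u ^ θ)` maps `[0, 1]` increasingly into `[0, 1]`, and each factor
`1 - t ^ a` decreases in `t`, which moves the comparison from `u₂` to `u₁`.
-/

open Finset

theorem le_add_deriv_mul_sub_of_antitoneOn {f f' : ℝ → ℝ} {s : Set ℝ} (hs : s.OrdConnected)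
    (hf : ∀ x ∈ s, HasDerivAt f (f' x) x) (hf' : AntitoneOn f' s) {x y : ℝ}
    (hx : x ∈ s) (hy : y ∈ s) : f x ≤ f y + f' y * (x - y) := by
  have hcont : ∀ {a b}, a ∈ s → b ∈ s → ContinuousOn f (Set.Icc a b) := fun ha hb z hz =>
    (hf z (hs.out ha hb hz)).continuousAt.continuousWithinAt
  have hderiv : ∀ {a b}, a ∈ s → b ∈ s → ∀ z ∈ Set.Ioo a b, HasDerivAt f (f' z) z :=
    fun ha hb z hz => hf z (hs.out ha hb (Set.Ioo_subset_Icc_self hz))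
  rcases lt_trichotomy x y with hxy | rfl | hyx
  · obtain ⟨ξ, hξ, hslope⟩ := exists_hasDerivAt_eq_slope f f' hxy (hcont hx hy) (hderiv hx hy)
    have hmvt : f y - f x = f' ξ * (y - x) := by
      rw [hslope, div_mul_cancel₀ _ (sub_ne_zero.mpr hxy.ne')]
    have hξy : f' y ≤ f' ξ := hf' (hs.out hx hy (Set.Ioo_subset_Icc_self hξ)) hy hξ.2.le
    nlinarith [sub_pos.mpr hxy]
  · simp
  · obtain ⟨ξ, hξ, hslope⟩ := exists_hasDerivAt_eq_slope f f' hyx (hcont hy hx) (hderiv hy hx)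
    have hmvt : f x - f y = f' ξ * (x - y) := by
      rw [hslope, div_mul_cancel₀ _ (sub_ne_zero.mpr hyx.ne')]
    have hξy : f' ξ ≤ f' y := hf' hy (hs.out hy hx (Set.Ioo_subset_Icc_self hξ)) hξ.1.le
    nlinarith [sub_pos.mpr hyx]

theorem sum_mul_nonneg_of_antitone_of_partial_sums_nonneg {n : ℕ} {c d : ℕ → ℝ}
    (hc : ∀ i, i + 1 < n → c (i + 1) ≤ c i)
    (hd : ∀ i, 1 ≤ i → i ≤ n - 1 → 0 ≤ ∑ k ∈ range i, d k)
    (hdn : ∑ k ∈ range n, d k = 0) :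
    0 ≤ ∑ k ∈ range n, c k * d k := by
  have hparts := sum_range_by_parts c d n
  simp only [smul_eq_mul] at hparts
  rw [hparts, hdn, mul_zero, zero_sub, neg_nonneg]
  refine sum_nonpos fun i hi => mul_nonpos_of_nonpos_of_nonneg ?_ ?_
  · have := hc i (by rw [mem_range] at hi; omega)
    linarith
  · exact hd (i + 1) (by omega) (by rw [mem_range] at hi; omega)

/-- Karamata's inequality for concave `f`. -/
theorem sum_le_sum_of_majorized_of_antitoneOn_deriv {f f' : ℝ → ℝ} {s : Set ℝ}
    (hs : s.OrdConnected) (hf : ∀ x ∈ s, HasDerivAt f (f' x) x) (hf' : AntitoneOn f' s)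
    {n : ℕ} {a b : ℕ → ℝ} (ha : ∀ k < n, a k ∈ s) (hb : ∀ k < n, b k ∈ s)
    (hb_mono : ∀ i, ∀ j, i ≤ j → j < n → b i ≤ b j)
    (hmaj : ∀ i, 1 ≤ i → i ≤ n - 1 → ∑ k ∈ range i, a k ≤ ∑ k ∈ range i, b k)
    (hsum : ∑ k ∈ range n, b k = ∑ k ∈ range n, a k) :
    ∑ k ∈ range n, f (a k) ≤ ∑ k ∈ range n, f (b k) := by
  have htangent : ∑ k ∈ range n, f (a k) ≤ ∑ k ∈ range n, (f (b k) - f' (b k) * (b k - a k)) :=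
    sum_le_sum fun k hk => by
      have := le_add_deriv_mul_sub_of_antitoneOn hs hf hf' (ha k (mem_range.mp hk))
        (hb k (mem_range.mp hk))
      linarith
  have habel : 0 ≤ ∑ k ∈ range n, f' (b k) * (b k - a k) := by
    refine sum_mul_nonneg_of_antitone_of_partial_sums_nonneg
      (fun i hi => hf' (hb i (by omega)) (hb (i + 1) hi) (hb_mono i (i + 1) (by omega) hi))
      (fun i hi₁ hi₂ => ?_) (by rw [sum_sub_distrib, hsum, sub_self])
    rw [sum_sub_distrib, sub_nonneg]
    exact hmaj i hi₁ hi₂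
  rw [sum_sub_distrib] at htangent
  linarith

section OneSubRpow

variable {t : ℝ}

theorem hasDerivAt_log_one_sub_rpow_s10 (ht₀ : 0 < t) (ht₁ : t < 1) {a : ℝ} (ha : 0 < a) :
    HasDerivAt (fun a => Real.log (1 - t ^ a)) (-(t ^ a * Real.log t) / (1 - t ^ a)) a := by
  have hta : t ^ a < 1 := Real.rpow_lt_one ht₀.le ht₁ ha
  have h : HasDerivAt (fun a : ℝ => 1 - t ^ a) (-(t ^ a * Real.log t)) a := by
    simpa using (Real.hasStrictDerivAt_const_rpow ht₀ a).hasDerivAt.const_sub 1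
  exact h.log (by linarith)

theorem antitoneOn_deriv_log_one_sub_rpow (ht₀ : 0 < t) (ht₁ : t < 1) :
    AntitoneOn (fun a : ℝ => -(t ^ a * Real.log t) / (1 - t ^ a)) (Set.Ioi 0) := by
  intro a ha b hb hab
  have hta : t ^ a < 1 := Real.rpow_lt_one ht₀.le ht₁ ha
  have htb : t ^ b < 1 := Real.rpow_lt_one ht₀.le ht₁ hb
  have hba : t ^ b ≤ t ^ a := Real.rpow_le_rpow_of_exponent_ge ht₀ ht₁.le hab
  have hodds : t ^ b / (1 - t ^ b) ≤ t ^ a / (1 - t ^ a) :=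
    div_le_div₀ (Real.rpow_pos_of_pos ht₀ a).le hba (by linarith) (by linarith)
  have hlog : 0 ≤ -Real.log t := neg_nonneg.mpr (Real.log_nonpos ht₀.le ht₁.le)
  calc -(t ^ b * Real.log t) / (1 - t ^ b) = -Real.log t * (t ^ b / (1 - t ^ b)) := by ring
    _ ≤ -Real.log t * (t ^ a / (1 - t ^ a)) := mul_le_mul_of_nonneg_left hodds hlog
    _ = -(t ^ a * Real.log t) / (1 - t ^ a) := by ring

theorem prod_one_sub_rpow_le_of_majorized (ht₀ : 0 ≤ t) (ht₁ : t ≤ 1) {n : ℕ} {α αs : ℕ → ℝ}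
    (hαpos : ∀ k < n, 0 < α k) (hαspos : ∀ k < n, 0 < αs k)
    (hαsmono : ∀ i, ∀ j, i ≤ j → j < n → αs i ≤ αs j)
    (hmaj : ∀ i, 1 ≤ i → i ≤ n - 1 → ∑ k ∈ range i, α k ≤ ∑ k ∈ range i, αs k)
    (hsum : ∑ k ∈ range n, αs k = ∑ k ∈ range n, α k) :
    ∏ k ∈ range n, (1 - t ^ α k) ≤ ∏ k ∈ range n, (1 - t ^ αs k) := by
  rcases ht₀.eq_or_lt with rfl | ht₀
  · have hone : ∀ β : ℕ → ℝ, (∀ k < n, 0 < β k) → ∏ k ∈ range n, (1 - (0 : ℝ) ^ β k) = 1 :=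
      fun β hβ => prod_eq_one fun k hk => by
        rw [Real.zero_rpow (hβ k (mem_range.mp hk)).ne', sub_zero]
    rw [hone α hαpos, hone αs hαspos]
  rcases ht₁.eq_or_lt with rfl | ht₁
  · simp
  have hpos : ∀ β : ℕ → ℝ, (∀ k < n, 0 < β k) → ∀ k ∈ range n, 0 < 1 - t ^ β k :=
    fun β hβ k hk => sub_pos.mpr (Real.rpow_lt_one ht₀.le ht₁ (hβ k (mem_range.mp hk)))
  rw [← Real.log_le_log_iff (prod_pos (hpos α hαpos)) (prod_pos (hpos αs hαspos)),
    Real.log_prod fun k hk => (hpos α hαpos k hk).ne',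
    Real.log_prod fun k hk => (hpos αs hαspos k hk).ne']
  exact sum_le_sum_of_majorized_of_antitoneOn_deriv Set.ordConnected_Ioi
    (fun a ha => hasDerivAt_log_one_sub_rpow_s10 ht₀ ht₁ ha)
    (antitoneOn_deriv_log_one_sub_rpow ht₀ ht₁) hαpos hαspos hαsmono hmaj hsum

end OneSubRpow

theorem prod_one_sub_rpow_antitone {n : ℕ} {α : ℕ → ℝ} (hα : ∀ k < n, 0 ≤ α k) {t₁ t₂ : ℝ}
    (ht₂ : 0 ≤ t₂) (ht₂₁ : t₂ ≤ t₁) (ht₁ : t₁ ≤ 1) :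
    ∏ k ∈ range n, (1 - t₁ ^ α k) ≤ ∏ k ∈ range n, (1 - t₂ ^ α k) :=
  prod_le_prod
    (fun k hk => sub_nonneg.mpr (Real.rpow_le_one (ht₂.trans ht₂₁) ht₁ (hα k (mem_range.mp hk))))
    (fun k hk => sub_le_sub_left (Real.rpow_le_rpow ht₂ ht₂₁ (hα k (mem_range.mp hk))) 1)

theorem series_st_order_pointwise_general (n : ℕ) (θ : ℝ) (hθ : 0 < θ)
    (α αs : ℕ → ℝ)
    (hαpos : ∀ k < n, 0 < α k) (hαspos : ∀ k < n, 0 < αs k)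
    (hαsmono : ∀ i, ∀ j, i ≤ j → j < n → αs i ≤ αs j)
    (hmaj : ∀ i, 1 ≤ i → i ≤ n - 1 →
      ∑ k ∈ Finset.range i, α k ≤ ∑ k ∈ Finset.range i, αs k)
    (hsum : ∑ k ∈ Finset.range n, αs k = ∑ k ∈ Finset.range n, α k)
    (u₁ u₂ : ℝ) (hu2 : 0 ≤ u₂) (hu21 : u₂ ≤ u₁) (hu1 : u₁ ≤ 1) :
    ∏ k ∈ Finset.range n, (1 - (u₁ ^ θ * (2 - u₁ ^ θ)) ^ α k) ≤
      ∏ k ∈ Finset.range n, (1 - (u₂ ^ θ * (2 - u₂ ^ θ)) ^ αs k) := by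
  have hs₂ : 0 ≤ u₂ ^ θ := Real.rpow_nonneg hu2 θ
  have hs₂₁ : u₂ ^ θ ≤ u₁ ^ θ := Real.rpow_le_rpow hu2 hu21 hθ.le
  have hs₁ : u₁ ^ θ ≤ 1 := Real.rpow_le_one (hu2.trans hu21) hu1 hθ.le
  -- `s (2 - s) = 1 - (1 - s) ^ 2` increases from `0` to `1` on `[0, 1]`
  have ht₂ : 0 ≤ u₂ ^ θ * (2 - u₂ ^ θ) := mul_nonneg hs₂ (by linarith)
  have ht₂₁ : u₂ ^ θ * (2 - u₂ ^ θ) ≤ u₁ ^ θ * (2 - u₁ ^ θ) := by nlinarith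
  have ht₁ : u₁ ^ θ * (2 - u₁ ^ θ) ≤ 1 := by nlinarith [sq_nonneg (1 - u₁ ^ θ)]
  exact (prod_one_sub_rpow_antitone (fun k hk => (hαpos k hk).le) ht₂ ht₂₁ ht₁).trans
    (prod_one_sub_rpow_le_of_majorized ht₂ (ht₂₁.trans ht₁) hαpos hαspos hαsmono hmaj hsum)

/-- Theorem 3.5 stated pointwise: if the increasing tuple `αs` is majorized by the increasing
tuple `α` (both positive), `θ > 0` and `0 ≤ u₂ ≤ u₁ ≤ 1`, then
`∏ (1 - (u₁^θ(2-u₁^θ))^(α_k)) ≤ ∏ (1 - (u₂^θ(2-u₂^θ))^(αs_k))`. -/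
theorem series_st_order_pointwise (n : ℕ) (hn : 1 ≤ n) (θ : ℝ) (hθ : 0 < θ)
    (α αs : ℕ → ℝ)
    (hαpos : ∀ k < n, 0 < α k) (hαspos : ∀ k < n, 0 < αs k)
    (hαmono : ∀ i, ∀ j, i ≤ j → j < n → α i ≤ α j)
    (hαsmono : ∀ i, ∀ j, i ≤ j → j < n → αs i ≤ αs j)
    (hmaj : ∀ i, 1 ≤ i → i ≤ n - 1 →
      ∑ k ∈ Finset.range i, α k ≤ ∑ k ∈ Finset.range i, αs k)
    (hsum : ∑ k ∈ Finset.range n, αs k = ∑ k ∈ Finset.range n, α k)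
    (u₁ u₂ : ℝ) (hu2 : 0 ≤ u₂) (hu21 : u₂ ≤ u₁) (hu1 : u₁ ≤ 1) :
    ∏ k ∈ Finset.range n, (1 - (u₁ ^ θ * (2 - u₁ ^ θ)) ^ α k) ≤
      ∏ k ∈ Finset.range n, (1 - (u₂ ^ θ * (2 - u₂ ^ θ)) ^ αs k) :=
  series_st_order_pointwise_general n θ hθ α αs hαpos hαspos hαsmono hmaj hsum u₁ u₂ hu2 hu21 hu1
end

section
/- Let n ≥ 1, let α > 0, let θ = (θ_1, …, θ_n) and θ* = (θ*_1, …, θ*_n) be n-tuples of positive real numbers each arranged in increasing order with θ weakly submajorized by θ*, and let u_1, u_2 be real numbers with 0 < u_2 ≤ u_1 < 1. Then ∏_{k=1}^n (u_2^(θ*_k) (2 − u_2^(θ*_k)))^α ≤ ∏_{k=1}^n (u_1^(θ_k) (2 − u_1^(θ_k)))^α. -/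
/-!
Since `x ↦ x (2 - x)` is increasing on `[0, 1]` and `u₂ ^ t ≤ u₁ ^ t`, lowering `u₁` to `u₂`
only decreases each factor, so it suffices to compare the two products at the same base `u`.
For fixed `u ∈ (0, 1]` the map `t ↦ -log (u ^ t (2 - u ^ t))` is increasing and convex on
`[0, ∞)`, and for such a function weak submajorization gives `∑ f (θ k) ≤ ∑ f (θs k)`
(Tomić–Weyl): bound each `f (θs k)` below by the tangent line at `θ k` and sum the slope terms
by parts against the tail sums `∑_{k ≥ i} (θs k - θ k) ≥ 0`.
-/

open Real Finset

lemma mul_sum_Ico_le_sum_Ico_mul {c d : ℕ → ℝ} {n : ℕ}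
    (hc : ∀ i j, i ≤ j → j < n → c i ≤ c j)
    (hd : ∀ i < n, 0 ≤ ∑ k ∈ Ico i n, d k) {i : ℕ} (hi : i ≤ n) :
    c i * ∑ k ∈ Ico i n, d k ≤ ∑ k ∈ Ico i n, c k * d k := by
  induction hi using Nat.decreasingInduction with
  | self => simp
  | of_succ i hin ih =>
    have hstep : c i * ∑ k ∈ Ico (i + 1) n, d k ≤ c (i + 1) * ∑ k ∈ Ico (i + 1) n, d k := by
      rcases (Nat.succ_le_of_lt hin).lt_or_eq with h | h
      · exact mul_le_mul_of_nonneg_right (hc i (i + 1) i.le_succ h) (hd _ h)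
      · simp [← h]
    rw [sum_eq_sum_Ico_succ_bot hin, sum_eq_sum_Ico_succ_bot hin, mul_add]
    linarith

theorem sum_le_sum_of_tail_sum_le {S : Set ℝ} {f g : ℝ → ℝ}
    (hf : ∀ a ∈ S, ∀ b ∈ S, f a + g a * (b - a) ≤ f b)
    (hg_nonneg : ∀ a ∈ S, 0 ≤ g a) (hg : MonotoneOn g S)
    {n : ℕ} {x y : ℕ → ℝ} (hxS : ∀ k < n, x k ∈ S) (hyS : ∀ k < n, y k ∈ S)
    (hx : ∀ i j, i ≤ j → j < n → x i ≤ x j)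
    (hxy : ∀ i < n, ∑ k ∈ Ico i n, x k ≤ ∑ k ∈ Ico i n, y k) :
    ∑ k ∈ range n, f (x k) ≤ ∑ k ∈ range n, f (y k) := by
  have hslopes : 0 ≤ ∑ k ∈ range n, g (x k) * (y k - x k) := by
    rcases n.eq_zero_or_pos with rfl | hn
    · simp
    have htail : ∀ i < n, 0 ≤ ∑ k ∈ Ico i n, (y k - x k) := fun i hi => by
      simpa [sum_sub_distrib] using hxy i hi
    have hmono : ∀ i j, i ≤ j → j < n → g (x i) ≤ g (x j) := fun i j hij hj =>
      hg (hxS i (hij.trans_lt hj)) (hxS j hj) (hx i j hij hj)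
    rw [range_eq_Ico]
    exact (mul_nonneg (hg_nonneg _ (hxS 0 hn)) (htail 0 hn)).trans
      (mul_sum_Ico_le_sum_Ico_mul hmono htail n.zero_le)
  calc ∑ k ∈ range n, f (x k)
      ≤ ∑ k ∈ range n, (f (x k) + g (x k) * (y k - x k)) := by
        rw [sum_add_distrib]; linarith
    _ ≤ ∑ k ∈ range n, f (y k) :=
        sum_le_sum fun k hk => hf _ (hxS k (mem_range.1 hk)) _ (hyS k (mem_range.1 hk))

/-- The logarithm of the Topp–Leone transform `x (2 - x)` of a cdf value `x`, in the variable
`s = log x`. It is concave on `exp s < 2`, with derivative `logTLSlope`. -/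
noncomputable def logTL (s : ℝ) : ℝ := s + log (2 - exp s)

noncomputable def logTLSlope (s : ℝ) : ℝ := 2 - 2 / (2 - exp s)

lemma log_mul_two_sub {x : ℝ} (hx : 0 < x) (hx2 : x < 2) :
    log (x * (2 - x)) = logTL (log x) := by
  rw [logTL, exp_log hx, log_mul hx.ne' (by linarith)]

lemma logTL_le_tangent {A B : ℝ} (hA : exp A < 2) (hB : exp B < 2) :
    logTL B ≤ logTL A + logTLSlope A * (B - A) := by
  have h2A : 0 < 2 - exp A := by linarith
  have h2B : 0 < 2 - exp B := by linarith
  have hlog : log (2 - exp B) - log (2 - exp A) ≤ (exp A - exp B) / (2 - exp A) := by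
    rw [← log_div h2B.ne' h2A.ne']
    calc log ((2 - exp B) / (2 - exp A)) ≤ (2 - exp B) / (2 - exp A) - 1 :=
          log_le_sub_one_of_pos (div_pos h2B h2A)
      _ = (exp A - exp B) / (2 - exp A) := by field_simp; ring
  have hexp : exp A - exp B ≤ exp A * (A - B) := by
    have h := add_one_le_exp (B - A)
    rw [exp_sub] at h
    have := (le_div_iff₀ (exp_pos A)).1 h
    linarith
  have hslope : (B - A) + exp A * (A - B) / (2 - exp A) = logTLSlope A * (B - A) := by
    rw [logTLSlope]; field_simp; ring
  have := div_le_div_of_nonneg_right hexp h2A.le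
  rw [logTL, logTL]
  linarith

lemma logTLSlope_nonneg {s : ℝ} (hs : s ≤ 0) : 0 ≤ logTLSlope s := by
  have h1 : 1 ≤ 2 - exp s := by linarith [exp_le_one_iff.2 hs]
  rw [logTLSlope, sub_nonneg, div_le_iff₀ (by linarith)]
  linarith

lemma logTLSlope_le_of_le {s s' : ℝ} (hss' : s ≤ s') (hs' : exp s' < 2) :
    logTLSlope s' ≤ logTLSlope s := by
  have := exp_le_exp.2 hss'
  rw [logTLSlope, logTLSlope]
  gcongr

lemma mul_two_sub_le_mul_two_sub {x y : ℝ} (hxy : x ≤ y) (hy : y ≤ 1) :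
    x * (2 - x) ≤ y * (2 - y) := by
  nlinarith

lemma rpow_mul_two_sub_rpow_pos {u t : ℝ} (hu : 0 < u) (hu1 : u ≤ 1) (ht : 0 ≤ t) :
    0 < u ^ t * (2 - u ^ t) :=
  mul_pos (rpow_pos_of_pos hu t) (by linarith [rpow_le_one hu.le hu1 ht])

lemma prod_rpow_mul_two_sub_le {u : ℝ} (hu : 0 < u) (hu1 : u ≤ 1) {n : ℕ} {θ θs : ℕ → ℝ}
    (hθ : ∀ k < n, 0 ≤ θ k) (hθs : ∀ k < n, 0 ≤ θs k)
    (hθmono : ∀ i j, i ≤ j → j < n → θ i ≤ θ j)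
    (hsubmaj : ∀ i < n, ∑ k ∈ Ico i n, θ k ≤ ∑ k ∈ Ico i n, θs k) :
    ∏ k ∈ range n, (u ^ θs k * (2 - u ^ θs k)) ≤ ∏ k ∈ range n, (u ^ θ k * (2 - u ^ θ k)) := by
  have hL : log u ≤ 0 := log_nonpos hu.le hu1
  have hexp : ∀ t : ℝ, 0 ≤ t → exp (t * log u) < 2 := fun t ht => by
    linarith [exp_le_one_iff.2 (mul_nonpos_of_nonneg_of_nonpos ht hL)]
  have hpow : ∀ t : ℝ, 0 ≤ t → 0 < u ^ t ∧ u ^ t < 2 := fun t ht =>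
    ⟨rpow_pos_of_pos hu t, by linarith [rpow_le_one hu.le hu1 ht]⟩
  have hfac : ∀ t : ℝ, 0 ≤ t → log (u ^ t * (2 - u ^ t)) = logTL (t * log u) := fun t ht => by
    rw [log_mul_two_sub (hpow t ht).1 (hpow t ht).2, log_rpow hu]
  have hpos : ∀ t : ℝ, 0 ≤ t → 0 < u ^ t * (2 - u ^ t) := fun t ht =>
    rpow_mul_two_sub_rpow_pos hu hu1 ht
  have key := sum_le_sum_of_tail_sum_le (S := Set.Ici 0) (f := fun t => -logTL (t * log u))
    (g := fun t => -log u * logTLSlope (t * log u))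
    (fun a ha b hb => by
      have := logTL_le_tangent (hexp a ha) (hexp b hb)
      linear_combination this)
    (fun a ha => mul_nonneg (neg_nonneg.2 hL)
      (logTLSlope_nonneg (mul_nonpos_of_nonneg_of_nonpos ha hL)))
    (fun a ha b hb hab => mul_le_mul_of_nonneg_left
      (logTLSlope_le_of_le (mul_le_mul_of_nonpos_right hab hL) (hexp a ha)) (neg_nonneg.2 hL))
    hθ hθs hθmono hsubmaj
  simp only [sum_neg_distrib, neg_le_neg_iff] at key
  rw [← log_le_log_iff (prod_pos fun k hk => hpos _ (hθs k (mem_range.1 hk)))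
    (prod_pos fun k hk => hpos _ (hθ k (mem_range.1 hk))),
    log_prod fun k hk => (hpos _ (hθs k (mem_range.1 hk))).ne',
    log_prod fun k hk => (hpos _ (hθ k (mem_range.1 hk))).ne',
    sum_congr rfl fun k hk => hfac _ (hθs k (mem_range.1 hk)),
    sum_congr rfl fun k hk => hfac _ (hθ k (mem_range.1 hk))]
  exact key

theorem parallel_st_order_submaj_pointwise_general (n : ℕ) (α : ℝ) (hα : 0 < α)
    (θ θs : ℕ → ℝ)
    (hθpos : ∀ k < n, 0 < θ k) (hθspos : ∀ k < n, 0 < θs k)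
    (hθmono : ∀ i, ∀ j, i ≤ j → j < n → θ i ≤ θ j)
    (hsubmaj : ∀ i < n, ∑ k ∈ Finset.Ico i n, θ k ≤ ∑ k ∈ Finset.Ico i n, θs k)
    (u₁ u₂ : ℝ) (hu2 : 0 < u₂) (hu21 : u₂ ≤ u₁) (hu1 : u₁ < 1) :
    ∏ k ∈ Finset.range n, (u₂ ^ θs k * (2 - u₂ ^ θs k)) ^ α ≤
      ∏ k ∈ Finset.range n, (u₁ ^ θ k * (2 - u₁ ^ θ k)) ^ α := by
  have hu₁ : 0 < u₁ := hu2.trans_le hu21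
  have hθs : ∀ k ∈ range n, 0 ≤ θs k := fun k hk => (hθspos k (mem_range.1 hk)).le
  have hfac₂ : ∀ k ∈ range n, 0 ≤ u₂ ^ θs k * (2 - u₂ ^ θs k) := fun k hk =>
    (rpow_mul_two_sub_rpow_pos hu2 (hu21.trans hu1.le) (hθs k hk)).le
  have hfac₁ : ∀ k ∈ range n, 0 ≤ u₁ ^ θ k * (2 - u₁ ^ θ k) := fun k hk =>
    (rpow_mul_two_sub_rpow_pos hu₁ hu1.le (hθpos k (mem_range.1 hk)).le).le
  rw [finsetProd_rpow _ _ hfac₂, finsetProd_rpow _ _ hfac₁]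
  refine rpow_le_rpow (prod_nonneg hfac₂) ?_ hα.le
  calc ∏ k ∈ range n, (u₂ ^ θs k * (2 - u₂ ^ θs k))
      ≤ ∏ k ∈ range n, (u₁ ^ θs k * (2 - u₁ ^ θs k)) :=
        prod_le_prod hfac₂ fun k hk => mul_two_sub_le_mul_two_sub
          (rpow_le_rpow hu2.le hu21 (hθs k hk)) (rpow_le_one hu₁.le hu1.le (hθs k hk))
    _ ≤ ∏ k ∈ range n, (u₁ ^ θ k * (2 - u₁ ^ θ k)) :=
        prod_rpow_mul_two_sub_le hu₁ hu1.le (fun k hk => (hθpos k hk).le)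
          (fun k hk => (hθspos k hk).le) hθmono hsubmaj

/-- Theorem 3.6(i) stated pointwise: if the increasing tuple `θ` is weakly submajorized by
the increasing tuple `θs` (both positive), `α > 0` and `0 < u₂ ≤ u₁ < 1`, then
`∏ (u₂^(θs_k)(2-u₂^(θs_k)))^α ≤ ∏ (u₁^(θ_k)(2-u₁^(θ_k)))^α`. -/
theorem parallel_st_order_submaj_pointwise (n : ℕ) (hn : 1 ≤ n) (α : ℝ) (hα : 0 < α)
    (θ θs : ℕ → ℝ)
    (hθpos : ∀ k < n, 0 < θ k) (hθspos : ∀ k < n, 0 < θs k)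
    (hθmono : ∀ i, ∀ j, i ≤ j → j < n → θ i ≤ θ j)
    (hθsmono : ∀ i, ∀ j, i ≤ j → j < n → θs i ≤ θs j)
    (hsubmaj : ∀ i < n, ∑ k ∈ Finset.Ico i n, θ k ≤ ∑ k ∈ Finset.Ico i n, θs k)
    (u₁ u₂ : ℝ) (hu2 : 0 < u₂) (hu21 : u₂ ≤ u₁) (hu1 : u₁ < 1) :
    ∏ k ∈ Finset.range n, (u₂ ^ θs k * (2 - u₂ ^ θs k)) ^ α ≤
      ∏ k ∈ Finset.range n, (u₁ ^ θ k * (2 - u₁ ^ θ k)) ^ α :=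
  parallel_st_order_submaj_pointwise_general n α hα θ θs hθpos hθspos hθmono hsubmaj u₁ u₂ hu2 hu21
    hu1
end
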